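/- arXiv:0710.3249 — 5 statements merged into one kernel-verified Lean document; each statement's English description precedes it below -/
import Mathlib

section
/- Let H be a Hilbert space over ℝ or ℂ, and let A, B be bounded self-adjoint positive-definite operators on H (i.e., ⟨Ah,h⟩ > 0 and ⟨Bh,h⟩ > 0 for all h ≠ 0). Let T be a bounded self-adjoint operator on H such that Re⟨Th,h⟩ ≥ 2·√(Re⟨Ah,h⟩·Re⟨Bh,h⟩) for all h ∈ H. Then there exists τ > 0 such that Re⟨Th,h⟩ ≥ τ·Re⟨Ah,h⟩ + τ⁻¹·Re⟨Bh,h⟩ for all h ∈ H. -/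
open RCLike
open scoped InnerProductSpace

/-! Write `a, b, t` for the forms of `A, B, T`. For `h ≠ 0` the `τ > 0` with
`τ a(h) + τ⁻¹ b(h) ≤ t(h)` form the interval `[lo h, hi h]` between the roots of
`a(h) τ² - t(h) τ + b(h)`. It contains `√(b(h)/a(h))`, so `τ² a(h) < b(h)` to its left and
`τ² a(h) > b(h)` to its right. Any two of these intervals meet, hence all of them do.

If the intervals of `h` and `k` were separated by `c`, then `c a + c⁻¹ b - t` would be positive
at `h` and `k` while `b - c² a` has opposite signs there. On the null cone `b = c² a` the
hypothesis reads `c a + c⁻¹ b = 2 √(a b) ≤ t`. In the real plane spanned by `h, k` the two null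
lines of `b - c² a` contain `z₁, z₂` with `h` a positive and `k` a mixed combination of them,
and a quadratic form that is `≤ 0` at `z₁, z₂` cannot be positive at both such combinations. -/

theorem exists_forall_mul_add_inv_mul_le_iff {a b t : ℝ} (ha : 0 < a) (hb : 0 < b)
    (ht : 2 * √(a * b) ≤ t) :
    ∃ lo hi : ℝ, 0 < lo ∧ lo ≤ hi ∧ (∀ τ, 0 < τ → τ < lo → τ ^ 2 * a < b) ∧
      (∀ τ, hi < τ → b < τ ^ 2 * a) ∧ ∀ τ, 0 < τ → (τ * a + τ⁻¹ * b ≤ t ↔ lo ≤ τ ∧ τ ≤ hi) := by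
  have hab : 0 < a * b := mul_pos ha hb
  have hsqrt : 0 < √(a * b) := Real.sqrt_pos.2 hab
  have hdisc : 4 * (a * b) ≤ t ^ 2 := by
    nlinarith [Real.sq_sqrt hab.le]
  set d := √(t ^ 2 - 4 * (a * b))
  have hd : d ^ 2 = t ^ 2 - 4 * (a * b) := Real.sq_sqrt (by linarith)
  have hd₀ : 0 ≤ d := Real.sqrt_nonneg _
  have hdt : d < t := by nlinarith
  set lo := (t - d) / (2 * a) with hlo
  set hi := (t + d) / (2 * a) with hhi
  have hlo_hi : lo * hi * a = b := by
    rw [hlo, hhi]; field_simp; linear_combination -hd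
  have hlo₀ : 0 < lo := div_pos (by linarith) (by positivity)
  have hlohi : lo ≤ hi := div_le_div_of_nonneg_right (by linarith) (by positivity)
  refine ⟨lo, hi, hlo₀, hlohi, fun τ hτ hτlo => ?_, fun τ hτhi => ?_, fun τ hτ => ?_⟩
  · nlinarith [mul_lt_mul_of_pos_right (mul_lt_mul'' hτlo hτlo hτ.le hτ.le) ha]
  · nlinarith [mul_lt_mul_of_pos_right (mul_lt_mul'' hτhi hτhi (by linarith) (by linarith)) ha]
  have hfactor : τ * (τ * a + τ⁻¹ * b - t) = a * ((τ - lo) * (τ - hi)) := by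
    rw [← hlo_hi, hlo, hhi]; field_simp; ring
  constructor
  · intro hle
    have : (τ - lo) * (τ - hi) ≤ 0 := by nlinarith
    constructor <;> nlinarith
  · rintro ⟨h₁, h₂⟩
    have : τ * (τ * a + τ⁻¹ * b - t) ≤ 0 := by
      rw [hfactor]; exact mul_nonpos_of_nonneg_of_nonpos ha.le (by nlinarith)
    nlinarith

theorem exists_roots_neg_pos {g₀ g₁ g₂ : ℝ} (hg₀ : 0 < g₀) (hg₂ : g₂ < 0) :
    ∃ u₁ u₂ : ℝ, u₁ < 0 ∧ 0 < u₂ ∧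
      g₀ + g₁ * u₁ + g₂ * u₁ ^ 2 = 0 ∧ g₀ + g₁ * u₂ + g₂ * u₂ ^ 2 = 0 := by
  set s := √(g₁ ^ 2 - 4 * g₂ * g₀)
  have hs : s ^ 2 = g₁ ^ 2 - 4 * g₂ * g₀ := Real.sq_sqrt (by nlinarith)
  have hs₁ : |g₁| < s := by
    rw [← Real.sqrt_sq_eq_abs]; exact Real.sqrt_lt_sqrt (sq_nonneg _) (by nlinarith)
  have hroot : ∀ u, u = (-g₁ + s) / (2 * g₂) ∨ u = (-g₁ - s) / (2 * g₂) →
      g₀ + g₁ * u + g₂ * u ^ 2 = 0 := fun u hu => by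
    rw [← quadratic_eq_zero_iff (b := g₁) (c := g₀) hg₂.ne (by rw [discrim, ← sq, hs]) u] at hu
    linear_combination hu
  obtain ⟨hs₂, hs₃⟩ := abs_lt.1 hs₁
  exact ⟨_, _, div_neg_of_pos_of_neg (by linarith) (by linarith),
    div_pos_of_neg_of_neg (by linarith) (by linarith), hroot _ (.inl rfl), hroot _ (.inr rfl)⟩

/-- In coordinates on `ℝ²`: a quadratic form that is `≤ 0` on both null lines of an indefinite
form `g` with `g(1,0) > 0 > g(0,1)` is `≤ 0` at `(1,0)` or at `(0,1)`. -/
theorem nonpos_or_nonpos_of_eq_zero_imp {g₀ g₁ g₂ f₀ f₁ f₂ : ℝ} (hg₀ : 0 < g₀) (hg₂ : g₂ < 0)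
    (hfg : ∀ u, g₀ + g₁ * u + g₂ * u ^ 2 = 0 → f₀ + f₁ * u + f₂ * u ^ 2 ≤ 0) :
    f₀ ≤ 0 ∨ f₂ ≤ 0 := by
  obtain ⟨u₁, u₂, hu₁, hu₂, hg₁, hg₂⟩ := exists_roots_neg_pos (g₁ := g₁) hg₀ hg₂
  have hf₁ := hfg u₁ hg₁
  have hf₂ := hfg u₂ hg₂
  have hcomb : (u₂ - u₁) * (f₀ - u₁ * u₂ * f₂) ≤ 0 := by nlinarith
  by_contra! h
  nlinarith [mul_pos (mul_pos (neg_pos.2 hu₁) hu₂) h.2]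

namespace ContinuousLinearMap

variable {𝕜 E : Type*} [RCLike 𝕜] [NormedAddCommGroup E] [InnerProductSpace 𝕜 E]

theorem reApplyInnerSelf_add_smul (F : E →L[𝕜] E) (h k : E) (u : ℝ) :
    F.reApplyInnerSelf (h + (u : 𝕜) • k) =
      F.reApplyInnerSelf h + (re ⟪F h, k⟫_𝕜 + re ⟪F k, h⟫_𝕜) * u +
        F.reApplyInnerSelf k * u ^ 2 := by
  simp only [reApplyInnerSelf_apply, map_add, map_smul, inner_add_left, inner_add_right,
    inner_smul_left, inner_smul_right, conj_ofReal, re_ofReal_mul]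
  ring

theorem reApplyInnerSelf_nonpos_or_of_eq_zero_imp {F G : E →L[𝕜] E}
    (hFG : ∀ z, G.reApplyInnerSelf z = 0 → F.reApplyInnerSelf z ≤ 0) {h k : E}
    (hh : 0 < G.reApplyInnerSelf h) (hk : G.reApplyInnerSelf k < 0) :
    F.reApplyInnerSelf h ≤ 0 ∨ F.reApplyInnerSelf k ≤ 0 :=
  nonpos_or_nonpos_of_eq_zero_imp hh hk fun u hu => by
    simpa only [reApplyInnerSelf_add_smul] using
      hFG (h + (u : 𝕜) • k) (by rwa [reApplyInnerSelf_add_smul])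

theorem add_reApplyInnerSelf (F G : E →L[𝕜] E) (z : E) :
    (F + G).reApplyInnerSelf z = F.reApplyInnerSelf z + G.reApplyInnerSelf z := by
  simp only [reApplyInnerSelf_apply, add_apply, inner_add_left, map_add]

theorem sub_reApplyInnerSelf (F G : E →L[𝕜] E) (z : E) :
    (F - G).reApplyInnerSelf z = F.reApplyInnerSelf z - G.reApplyInnerSelf z := by
  simp only [reApplyInnerSelf_apply, sub_apply, inner_sub_left, map_sub]

theorem ofReal_smul_reApplyInnerSelf (a : ℝ) (F : E →L[𝕜] E) (z : E) :
    ((a : 𝕜) • F).reApplyInnerSelf z = a * F.reApplyInnerSelf z := by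
  simp only [reApplyInnerSelf_apply, smul_apply, inner_smul_left, conj_ofReal, re_ofReal_mul]

theorem reApplyInnerSelf_mul_add_inv_mul_le_or {A B T : E →L[𝕜] E}
    (hT : ∀ z, 2 * √(A.reApplyInnerSelf z * B.reApplyInnerSelf z) ≤ T.reApplyInnerSelf z)
    {c : ℝ} (hc : 0 < c) {h k : E}
    (hh : c ^ 2 * A.reApplyInnerSelf h < B.reApplyInnerSelf h)
    (hk : B.reApplyInnerSelf k < c ^ 2 * A.reApplyInnerSelf k) :
    c * A.reApplyInnerSelf h + c⁻¹ * B.reApplyInnerSelf h ≤ T.reApplyInnerSelf h ∨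
      c * A.reApplyInnerSelf k + c⁻¹ * B.reApplyInnerSelf k ≤ T.reApplyInnerSelf k := by
  simp only [← sub_nonpos (b := T.reApplyInnerSelf _)]
  have := reApplyInnerSelf_nonpos_or_of_eq_zero_imp
    (F := (c : 𝕜) • A + ((c⁻¹ : ℝ) : 𝕜) • B - T) (G := B - ((c ^ 2 : ℝ) : 𝕜) • A) ?_
    (h := h) (k := k) ?_ ?_
  all_goals simp only [add_reApplyInnerSelf, sub_reApplyInnerSelf, ofReal_smul_reApplyInnerSelf]
    at *
  · exact this
  · intro z hz
    have hb : B.reApplyInnerSelf z = c ^ 2 * A.reApplyInnerSelf z := by linarith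
    have ht := hT z
    rw [hb, show A.reApplyInnerSelf z * (c ^ 2 * A.reApplyInnerSelf z) =
      (c * A.reApplyInnerSelf z) ^ 2 by ring, Real.sqrt_sq_eq_abs] at ht
    rw [hb, show c⁻¹ * (c ^ 2 * A.reApplyInnerSelf z) = c * A.reApplyInnerSelf z by field_simp]
    linarith [le_abs_self (c * A.reApplyInnerSelf z)]
  · linarith
  · linarith

end ContinuousLinearMap

theorem three_forms_operators_general
    {𝕜 : Type*} [RCLike 𝕜] {H : Type*} [NormedAddCommGroup H]
    [InnerProductSpace 𝕜 H]
    (A B T : H →L[𝕜] H)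
    (hApos : ∀ h : H, h ≠ 0 → 0 < re (inner 𝕜 (A h) h))
    (hBpos : ∀ h : H, h ≠ 0 → 0 < re (inner 𝕜 (B h) h))
    (hineq : ∀ h : H,
      2 * Real.sqrt (re (inner 𝕜 (A h) h) * re (inner 𝕜 (B h) h))
        ≤ re (inner 𝕜 (T h) h)) :
    ∃ τ : ℝ, 0 < τ ∧ ∀ h : H,
      τ * re (inner 𝕜 (A h) h) + τ⁻¹ * re (inner 𝕜 (B h) h)
        ≤ re (inner 𝕜 (T h) h) := by
  simp only [← ContinuousLinearMap.reApplyInnerSelf_apply] at hApos hBpos hineq ⊢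
  rcases subsingleton_or_nontrivial H with hH | hH
  · refine ⟨1, one_pos, fun h => ?_⟩
    simp [Subsingleton.elim h 0, ContinuousLinearMap.reApplyInnerSelf_apply]
  obtain ⟨h₀, hh₀⟩ := exists_ne (0 : H)
  choose! lo hi hlo hlohi hlt_lo hgt_hi hIcc using fun h (hh : h ≠ 0) =>
    exists_forall_mul_add_inv_mul_le_iff (hApos h hh) (hBpos h hh) (hineq h)
  have hpair : ∀ h ≠ 0, ∀ k ≠ 0, lo h ≤ hi k := by
    intro h hh k hk
    by_contra! hlt
    obtain ⟨c, hkc, hch⟩ := exists_between hlt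
    have hc : 0 < c := by linarith [hlo k hk, hlohi k hk]
    rcases ContinuousLinearMap.reApplyInnerSelf_mul_add_inv_mul_le_or hineq hc
      (by linarith [hlt_lo h hh c hc hch]) (by linarith [hgt_hi k hk c hkc]) with h₁ | h₁
    · exact hch.not_ge ((hIcc h hh c hc).1 h₁).1
    · exact hkc.not_ge ((hIcc k hk c hc).1 h₁).2
  obtain ⟨τ, hτlo, hτhi⟩ := exists_between_of_forall_le (s := lo '' {h : H | h ≠ 0})
    (t := hi '' {h : H | h ≠ 0}) ⟨_, h₀, hh₀, rfl⟩ ⟨_, h₀, hh₀, rfl⟩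
    (by rintro _ ⟨h, hh, rfl⟩ _ ⟨k, hk, rfl⟩; exact hpair h hh k hk)
  have hτ : 0 < τ := (hlo h₀ hh₀).trans_le (hτlo ⟨h₀, hh₀, rfl⟩)
  refine ⟨τ, hτ, fun h => ?_⟩
  rcases eq_or_ne h 0 with rfl | hh
  · simp [ContinuousLinearMap.reApplyInnerSelf_apply]
  · exact (hIcc h hh τ hτ).2 ⟨hτlo ⟨h, hh, rfl⟩, hτhi ⟨h, hh, rfl⟩⟩

/-- Theorem (operator form): if `A, B` are bounded self-adjoint positive-definite
operators on a Hilbert space `H` over `ℝ` or `ℂ`, and `T` is a bounded self-adjoint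
operator with `Re⟨Th,h⟩ ≥ 2√(Re⟨Ah,h⟩·Re⟨Bh,h⟩)` for all `h`, then there is `τ > 0`
with `Re⟨Th,h⟩ ≥ τ·Re⟨Ah,h⟩ + τ⁻¹·Re⟨Bh,h⟩` for all `h`. -/
theorem three_forms_operators
    {𝕜 : Type*} [RCLike 𝕜] {H : Type*} [NormedAddCommGroup H]
    [InnerProductSpace 𝕜 H] [CompleteSpace H]
    (A B T : H →L[𝕜] H)
    (hA : IsSelfAdjoint A) (hB : IsSelfAdjoint B) (hT : IsSelfAdjoint T)
    (hApos : ∀ h : H, h ≠ 0 → 0 < re (inner 𝕜 (A h) h))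
    (hBpos : ∀ h : H, h ≠ 0 → 0 < re (inner 𝕜 (B h) h))
    (hineq : ∀ h : H,
      2 * Real.sqrt (re (inner 𝕜 (A h) h) * re (inner 𝕜 (B h) h))
        ≤ re (inner 𝕜 (T h) h)) :
    ∃ τ : ℝ, 0 < τ ∧ ∀ h : H,
      τ * re (inner 𝕜 (A h) h) + τ⁻¹ * re (inner 𝕜 (B h) h)
        ≤ re (inner 𝕜 (T h) h) :=
  three_forms_operators_general A B T hApos hBpos hineq
end

section
/- Let H be a finite-dimensional Hilbert space over ℝ or ℂ, let A, B be self-adjoint positive-definite operators on H, and let T be a self-adjoint operator on H such that Re⟨Th,h⟩ ≥ 2·√(Re⟨Ah,h⟩·Re⟨Bh,h⟩) for all h ∈ H. Then trace T ≥ 2·√(trace A · trace B), where all three traces are real numbers. -/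
/-! Put `α = re tr A`, `β = re tr B`. The operator `D = β • A - α • B` has real trace zero, hence an
orthonormal basis `(eᵢ)` in which every diagonal entry `re ⟪D eᵢ, eᵢ⟫` vanishes: while one entry is
negative and another positive, a rotation in the plane of the two basis vectors (intermediate value
theorem) makes the first one zero and keeps their sum. In that basis the diagonal entries `aᵢ` of `A`
and `bᵢ` of `B` satisfy `β aᵢ = α bᵢ`, so `∑ √(aᵢ bᵢ) = √(α β)`, and summing the pointwise hypothesis
over the basis gives the trace inequality. -/

open RCLike
open scoped InnerProductSpace

theorem Real.sum_sqrt_mul_of_proportional {ι : Type*} (s : Finset ι) {a b : ι → ℝ}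
    (ha : ∀ i ∈ s, 0 ≤ a i)
    (hab : ∀ i ∈ s, (∑ j ∈ s, b j) * a i = (∑ j ∈ s, a j) * b i) :
    ∑ i ∈ s, √(a i * b i) = √((∑ i ∈ s, a i) * ∑ i ∈ s, b i) := by
  set α := ∑ i ∈ s, a i
  set β := ∑ i ∈ s, b i
  rcases (show 0 ≤ α from Finset.sum_nonneg ha).eq_or_lt with hα | hα
  · have hzero : ∀ i ∈ s, a i = 0 := (Finset.sum_eq_zero_iff_of_nonneg ha).mp hα.symm
    rw [← hα, zero_mul, Real.sqrt_zero]
    exact Finset.sum_eq_zero fun i hi => by rw [hzero i hi, zero_mul, Real.sqrt_zero]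
  · have hsqrt (x : ℝ) (hx : 0 ≤ x) : √(x * (β / α * x)) = x * √(β / α) := by
      rw [mul_left_comm, Real.sqrt_mul' _ (mul_self_nonneg x), Real.sqrt_mul_self hx, mul_comm]
    calc ∑ i ∈ s, √(a i * b i) = ∑ i ∈ s, a i * √(β / α) := Finset.sum_congr rfl fun i hi => by
          rw [← hsqrt _ (ha i hi), div_mul_eq_mul_div, hab i hi, mul_div_cancel_left₀ _ hα.ne']
      _ = √(α * β) := by
          rw [← Finset.sum_mul, ← hsqrt _ hα.le, div_mul_cancel₀ _ hα.ne']

section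

variable {𝕜 H : Type*} [RCLike 𝕜] [NormedAddCommGroup H] [InnerProductSpace 𝕜 H]

theorem LinearMap.re_trace_eq_sum_re_inner {ι : Type*} [Fintype ι] (S : H →ₗ[𝕜] H)
    (b : OrthonormalBasis ι 𝕜 H) :
    re (LinearMap.trace 𝕜 H S) = ∑ i, re ⟪S (b i), b i⟫_𝕜 := by
  simp only [S.trace_eq_sum_inner b, map_sum, inner_re_symm (b _)]

theorem re_inner_map_smul_add_smul (D : H →ₗ[𝕜] H) (u v : H) (c s : ℝ) :
    re ⟪D ((c : 𝕜) • u + (s : 𝕜) • v), (c : 𝕜) • u + (s : 𝕜) • v⟫_𝕜 =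
      c ^ 2 * re ⟪D u, u⟫_𝕜 + c * s * (re ⟪D u, v⟫_𝕜 + re ⟪D v, u⟫_𝕜) +
        s ^ 2 * re ⟪D v, v⟫_𝕜 := by
  simp only [map_add, map_smul, inner_add_left, inner_add_right, inner_smul_left,
    inner_smul_right, conj_ofReal, re_ofReal_mul]
  ring

theorem exists_re_inner_map_smul_add_smul_eq_zero (D : H →ₗ[𝕜] H) {u v : H}
    (hu : re ⟪D u, u⟫_𝕜 < 0) (hv : 0 < re ⟪D v, v⟫_𝕜) :
    ∃ c s : ℝ, c ^ 2 + s ^ 2 = 1 ∧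
      re ⟪D ((c : 𝕜) • u + (s : 𝕜) • v), (c : 𝕜) • u + (s : 𝕜) • v⟫_𝕜 = 0 := by
  simp_rw [re_inner_map_smul_add_smul]
  obtain ⟨θ, -, hθ⟩ := intermediate_value_Icc Real.pi_div_two_pos.le
    (f := fun θ => Real.cos θ ^ 2 * re ⟪D u, u⟫_𝕜 +
      Real.cos θ * Real.sin θ * (re ⟪D u, v⟫_𝕜 + re ⟪D v, u⟫_𝕜) + Real.sin θ ^ 2 * re ⟪D v, v⟫_𝕜)
    (by fun_prop) (by simpa using ⟨hu.le, hv.le⟩)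
  exact ⟨Real.cos θ, Real.sin θ, Real.cos_sq_add_sin_sq θ, hθ⟩

section Givens

variable {ι : Type*} [DecidableEq ι]

variable (𝕜) in
def givensRotation (v : ι → H) (i j : ι) (c s : ℝ) : ι → H := fun k =>
  if k = i then (c : 𝕜) • v i + (s : 𝕜) • v j
  else if k = j then ((-s : ℝ) : 𝕜) • v i + (c : 𝕜) • v j
  else v k

theorem orthonormal_givensRotation {v : ι → H} (hv : Orthonormal 𝕜 v) {i j : ι} (hij : i ≠ j)
    {c s : ℝ} (hcs : c ^ 2 + s ^ 2 = 1) :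
    Orthonormal 𝕜 (givensRotation 𝕜 v i j c s) := by
  have hcs' : (c : 𝕜) ^ 2 + (s : 𝕜) ^ 2 = 1 := by exact_mod_cast hcs
  rw [orthonormal_iff_ite] at hv ⊢
  intro k l
  have hk : k = i ∨ k = j ∨ (k ≠ i ∧ k ≠ j) := by tauto
  have hl : l = i ∨ l = j ∨ (l ≠ i ∧ l ≠ j) := by tauto
  rcases hk with rfl | rfl | ⟨hki, hkj⟩ <;> rcases hl with rfl | rfl | ⟨hli, hlj⟩ <;>
    simp [givensRotation, *, hij.symm, Ne.symm, inner_add_left, inner_add_right,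
      inner_smul_left, inner_smul_right, -inner_self_eq_norm_sq_to_K] <;>
    first | ring1 | linear_combination hcs'

theorem sum_re_inner_map_givensRotation [Fintype ι] (D : H →ₗ[𝕜] H) (v : ι → H) {i j : ι}
    (hij : i ≠ j) {c s : ℝ} (hcs : c ^ 2 + s ^ 2 = 1) :
    ∑ k, re ⟪D (givensRotation 𝕜 v i j c s k), givensRotation 𝕜 v i j c s k⟫_𝕜 =
      ∑ k, re ⟪D (v k), v k⟫_𝕜 := by
  rw [← sub_eq_zero, ← Finset.sum_sub_distrib,
    Fintype.sum_eq_add i j hij fun k hk => by simp [givensRotation, hk.1, hk.2]]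
  simp only [givensRotation, if_pos, if_neg hij.symm, re_inner_map_smul_add_smul]
  linear_combination (re ⟪D (v i), v i⟫_𝕜 + re ⟪D (v j), v j⟫_𝕜) * hcs

end Givens

theorem Orthonormal.exists_orthonormal_re_inner_map_self_eq_zero {ι : Type*} [Fintype ι]
    (D : H →ₗ[𝕜] H) {v : ι → H} (hv : Orthonormal 𝕜 v)
    (hsum : ∑ i, re ⟪D (v i), v i⟫_𝕜 = 0) :
    ∃ w : ι → H, Orthonormal 𝕜 w ∧ ∀ i, re ⟪D (w i), w i⟫_𝕜 = 0 := by
  classical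
  induction hn : (Finset.univ.filter fun i => re ⟪D (v i), v i⟫_𝕜 ≠ 0).card
    using Nat.strong_induction_on generalizing v with
  | _ n ih =>
  by_cases hzero : ∀ i, re ⟪D (v i), v i⟫_𝕜 = 0
  · exact ⟨v, hv, hzero⟩
  obtain ⟨k, hk⟩ := not_forall.mp hzero
  obtain ⟨j, -, hj⟩ := Finset.exists_pos_of_sum_zero_of_exists_nonzero _ hsum
    ⟨k, Finset.mem_univ k, hk⟩
  obtain ⟨i, -, hi⟩ := Finset.exists_pos_of_sum_zero_of_exists_nonzero
    (fun i => -re ⟪D (v i), v i⟫_𝕜) (by simp [hsum]) ⟨k, Finset.mem_univ k, neg_ne_zero.mpr hk⟩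
  have hij : i ≠ j := by rintro rfl; linarith
  obtain ⟨c, s, hcs, hc⟩ := exists_re_inner_map_smul_add_smul_eq_zero D (neg_pos.mp hi) hj
  have hwi : re ⟪D (givensRotation 𝕜 v i j c s i), givensRotation 𝕜 v i j c s i⟫_𝕜 = 0 := by
    simpa only [givensRotation, if_pos] using hc
  refine ih _ ?_ (orthonormal_givensRotation hv hij hcs)
    ((sum_re_inner_map_givensRotation D v hij hcs).trans hsum) rfl
  rw [← hn]
  refine Finset.card_lt_card ((Finset.ssubset_iff_of_subset fun k => ?_).mpr ⟨i, ?_, ?_⟩)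
  · simp only [Finset.mem_filter, Finset.mem_univ, true_and]
    intro hk
    rcases eq_or_ne k i with rfl | hki
    · exact absurd hwi hk
    rcases eq_or_ne k j with rfl | hkj
    · exact hj.ne'
    simpa [givensRotation, hki, hkj] using hk
  · simpa using hi.ne
  · simpa using hwi

theorem exists_orthonormalBasis_re_inner_map_self_eq_zero [FiniteDimensional 𝕜 H]
    (D : H →ₗ[𝕜] H) (hD : re (LinearMap.trace 𝕜 H D) = 0) :
    ∃ b : OrthonormalBasis (Fin (Module.finrank 𝕜 H)) 𝕜 H, ∀ i, re ⟪D (b i), b i⟫_𝕜 = 0 := by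
  rw [D.re_trace_eq_sum_re_inner (stdOrthonormalBasis 𝕜 H)] at hD
  obtain ⟨w, hw, hw0⟩ :=
    (stdOrthonormalBasis 𝕜 H).orthonormal.exists_orthonormal_re_inner_map_self_eq_zero D hD
  refine ⟨.mk hw (hw.linearIndependent.span_eq_top_of_card_eq_finrank' (by simp)).ge, ?_⟩
  simpa using hw0

end

theorem three_forms_trace_general
    {𝕜 : Type*} [RCLike 𝕜] {H : Type*} [NormedAddCommGroup H]
    [InnerProductSpace 𝕜 H] [FiniteDimensional 𝕜 H]
    (A B T : H →ₗ[𝕜] H)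
    (hApos : ∀ h : H, h ≠ 0 → 0 < re (inner 𝕜 (A h) h))
    (hineq : ∀ h : H,
      2 * Real.sqrt (re (inner 𝕜 (A h) h) * re (inner 𝕜 (B h) h))
        ≤ re (inner 𝕜 (T h) h)) :
    2 * Real.sqrt (re (LinearMap.trace 𝕜 H A) * re (LinearMap.trace 𝕜 H B))
      ≤ re (LinearMap.trace 𝕜 H T) := by
  set α := re (LinearMap.trace 𝕜 H A)
  set β := re (LinearMap.trace 𝕜 H B)
  obtain ⟨b, hb⟩ := exists_orthonormalBasis_re_inner_map_self_eq_zero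
    ((β : 𝕜) • A - (α : 𝕜) • B) (by simp [α, β, mul_comm])
  have hprop : ∀ i, β * re ⟪A (b i), b i⟫_𝕜 = α * re ⟪B (b i), b i⟫_𝕜 := fun i => by
    simpa [inner_sub_left, inner_smul_left, re_ofReal_mul, sub_eq_zero] using hb i
  simp only [α, β, A.re_trace_eq_sum_re_inner b, B.re_trace_eq_sum_re_inner b] at hprop ⊢
  rw [T.re_trace_eq_sum_re_inner b, ← Real.sum_sqrt_mul_of_proportional _
    (fun i _ => (hApos _ (b.orthonormal.ne_zero i)).le) fun i _ => hprop i, Finset.mul_sum]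
  exact Finset.sum_le_sum fun i _ => hineq (b i)

/-- Trace version: if `A, B` are self-adjoint positive-definite operators on a
finite-dimensional Hilbert space `H` over `ℝ` or `ℂ` and `T` is a self-adjoint
operator with `Re⟨Th,h⟩ ≥ 2√(Re⟨Ah,h⟩·Re⟨Bh,h⟩)` for all `h`, then
`trace T ≥ 2√(trace A · trace B)` (all traces being real). -/
theorem three_forms_trace
    {𝕜 : Type*} [RCLike 𝕜] {H : Type*} [NormedAddCommGroup H]
    [InnerProductSpace 𝕜 H] [FiniteDimensional 𝕜 H]
    (A B T : H →ₗ[𝕜] H)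
    (hA : A.IsSymmetric) (hB : B.IsSymmetric) (hT : T.IsSymmetric)
    (hApos : ∀ h : H, h ≠ 0 → 0 < re (inner 𝕜 (A h) h))
    (hBpos : ∀ h : H, h ≠ 0 → 0 < re (inner 𝕜 (B h) h))
    (hineq : ∀ h : H,
      2 * Real.sqrt (re (inner 𝕜 (A h) h) * re (inner 𝕜 (B h) h))
        ≤ re (inner 𝕜 (T h) h)) :
    2 * Real.sqrt (re (LinearMap.trace 𝕜 H A) * re (LinearMap.trace 𝕜 H B))
      ≤ re (LinearMap.trace 𝕜 H T) :=
  three_forms_trace_general A B T hApos hineq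
end

section
/- Let H be a Hilbert space over ℝ or ℂ, let A, B be bounded self-adjoint positive-definite operators on H, and let T be a bounded self-adjoint operator on H such that Re⟨Th,h⟩ ≥ 2·√(Re⟨Ah,h⟩·Re⟨Bh,h⟩) for all h ∈ H. Then for every finite family of vectors e₁, …, e_n in H one has Σᵢ Re⟨Teᵢ,eᵢ⟩ ≥ 2·√( (Σᵢ Re⟨Aeᵢ,eᵢ⟩) · (Σᵢ Re⟨Beᵢ,eᵢ⟩) ). -/
/-!
For `h ≠ 0` write `a, b, t` for the values of the three forms at `h`. The scales `s > 0` with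
`s a + b / s ≤ t` are those between the roots of `a s² - t s + b`, an interval that is nonempty
because `t² ≥ 4ab`. Any two of these intervals meet: a scale `c` strictly between them would make
the form of `2cA - T` change sign between the two vectors while the form of `c²A - cT + B` is
positive at both, and on the real plane they span this produces a zero of the first form at which
the second is positive; but at a zero of `2cA - T` the discriminant bound gives
`c²A - cT + B ≤ 0`. Hence finitely many vectors admit a common scale `s`, and summing
`s a + b / s ≤ t` and applying `2√(XY) ≤ sX + Y/s` gives the claim.
-/

open RCLike Finset ContinuousLinearMap
open scoped InnerProductSpace

section Quadratic

variable {a b t s : ℝ}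

noncomputable def lowerRoot (a b t : ℝ) : ℝ := (t - √(t ^ 2 - 4 * a * b)) / (2 * a)

noncomputable def upperRoot (a b t : ℝ) : ℝ := (t + √(t ^ 2 - 4 * a * b)) / (2 * a)

lemma mul_add_div_le_of_mem_Icc_roots (ha : 0 < a) (hd : 4 * a * b ≤ t ^ 2) (hs : 0 < s)
    (h : s ∈ Set.Icc (lowerRoot a b t) (upperRoot a b t)) : s * a + b / s ≤ t := by
  have hD := Real.sq_sqrt (sub_nonneg.2 hd)
  obtain ⟨h₁, h₂⟩ := h
  rw [lowerRoot, div_le_iff₀ (by positivity)] at h₁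
  rw [upperRoot, le_div_iff₀ (by positivity)] at h₂
  have : b / s ≤ t - s * a := by
    rw [div_le_iff₀ hs]
    nlinarith
  linarith

lemma deriv_neg_and_pos_of_lt_lowerRoot (ha : 0 < a) (hd : 4 * a * b ≤ t ^ 2)
    (h : s < lowerRoot a b t) : 2 * a * s - t < 0 ∧ 0 < a * s ^ 2 - t * s + b := by
  have hD := Real.sq_sqrt (sub_nonneg.2 hd)
  have hD₀ := Real.sqrt_nonneg (t ^ 2 - 4 * a * b)
  rw [lowerRoot, lt_div_iff₀ (by positivity)] at h
  constructor <;> nlinarith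

lemma deriv_pos_and_pos_of_upperRoot_lt (ha : 0 < a) (hd : 4 * a * b ≤ t ^ 2)
    (h : upperRoot a b t < s) : 0 < 2 * a * s - t ∧ 0 < a * s ^ 2 - t * s + b := by
  have hD := Real.sq_sqrt (sub_nonneg.2 hd)
  have hD₀ := Real.sqrt_nonneg (t ^ 2 - 4 * a * b)
  rw [upperRoot, div_lt_iff₀ (by positivity)] at h
  constructor <;> nlinarith

lemma lowerRoot_pos (ha : 0 < a) (hb : 0 < b) (ht : 0 < t) (hd : 4 * a * b ≤ t ^ 2) :
    0 < lowerRoot a b t := by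
  have hD := Real.sq_sqrt (sub_nonneg.2 hd)
  have hD₀ := Real.sqrt_nonneg (t ^ 2 - 4 * a * b)
  refine div_pos ?_ (by positivity)
  nlinarith

lemma exists_neg_root_and_pos_root {p q r : ℝ} (hp : 0 < p) (hr : r < 0) :
    ∃ y x : ℝ, y < 0 ∧ 0 < x ∧ p * y ^ 2 + q * y + r = 0 ∧ p * x ^ 2 + q * x + r = 0 := by
  have hd : 0 ≤ q ^ 2 - 4 * p * r := by nlinarith [sq_nonneg q]
  have hqD : |q| < √(q ^ 2 - 4 * p * r) := by
    rw [← Real.sqrt_sq_eq_abs]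
    exact Real.sqrt_lt_sqrt (sq_nonneg q) (by nlinarith)
  obtain ⟨hq₁, hq₂⟩ := abs_lt.1 hqD
  have hD := Real.sq_sqrt hd
  set D := √(q ^ 2 - 4 * p * r)
  refine ⟨(-q - D) / (2 * p), (-q + D) / (2 * p),
    div_neg_of_neg_of_pos (by linarith) (by positivity), div_pos (by linarith) (by positivity),
    ?_, ?_⟩ <;>
  · field_simp
    nlinarith

lemma quadratic_pos_at_neg_of_nonpos_at_pos {p q r x y : ℝ} (hp : 0 ≤ p) (hr : 0 < r)
    (hy : y < 0) (hx : 0 < x) (hfx : p * x ^ 2 + q * x + r ≤ 0) :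
    0 < p * y ^ 2 + q * y + r := by
  nlinarith [mul_nonpos_of_nonneg_of_nonpos hx.le hfx,
    mul_nonneg hp (mul_pos hx (neg_pos.2 hy)).le, mul_pos (sub_pos.2 (hy.trans hx)) hr]

lemma four_mul_le_sq_of_two_sqrt_mul_le (ha : 0 ≤ a) (hb : 0 ≤ b) (h : 2 * √(a * b) ≤ t) :
    4 * a * b ≤ t ^ 2 := by
  have := Real.sq_sqrt (mul_nonneg ha hb)
  nlinarith [Real.sqrt_nonneg (a * b)]

lemma two_sqrt_mul_le_mul_add_div (hs : 0 < s) (ha : 0 ≤ a) (hb : 0 ≤ b) :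
    2 * √(a * b) ≤ s * a + b / s := by
  have hab : a * b = (s * a) * (b / s) := by field_simp
  rw [hab, Real.sqrt_mul (by positivity)]
  have h₁ := Real.sq_sqrt (show 0 ≤ s * a by positivity)
  have h₂ := Real.sq_sqrt (show 0 ≤ b / s by positivity)
  nlinarith [two_mul_le_add_sq (√(s * a)) (√(b / s))]

end Quadratic

section Operator

variable {𝕜 : Type*} [RCLike 𝕜] {H : Type*} [NormedAddCommGroup H] [InnerProductSpace 𝕜 H]

lemma reApplyInnerSelf_add_ofReal_smul (S : H →L[𝕜] H) (v w : H) (z : ℝ) :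
    S.reApplyInnerSelf (v + (z : 𝕜) • w) = S.reApplyInnerSelf v +
      z * (re ⟪S v, w⟫_𝕜 + re ⟪S w, v⟫_𝕜) + z ^ 2 * S.reApplyInnerSelf w := by
  simp only [reApplyInnerSelf_apply, map_add, map_smul, inner_add_left, inner_add_right,
    inner_smul_left, inner_smul_right, conj_ofReal, map_add, re_ofReal_mul]
  ring

lemma reApplyInnerSelf_sq_smul_sub_smul_add (A B T : H →L[𝕜] H) (c : ℝ) (u : H) :
    (((c ^ 2 : ℝ) : 𝕜) • A - (c : 𝕜) • T + B).reApplyInnerSelf u =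
      A.reApplyInnerSelf u * c ^ 2 - T.reApplyInnerSelf u * c + B.reApplyInnerSelf u := by
  simp only [reApplyInnerSelf_apply, add_apply, sub_apply, smul_apply, inner_add_left,
    inner_sub_left, inner_smul_left, conj_ofReal, map_add, map_sub, re_ofReal_mul]
  ring

lemma reApplyInnerSelf_smul_sub (A T : H →L[𝕜] H) (c : ℝ) (u : H) :
    (((2 * c : ℝ) : 𝕜) • A - T).reApplyInnerSelf u =
      2 * A.reApplyInnerSelf u * c - T.reApplyInnerSelf u := by
  simp only [reApplyInnerSelf_apply, sub_apply, smul_apply, inner_sub_left, inner_smul_left,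
    conj_ofReal, map_sub, re_ofReal_mul]
  ring

lemma reApplyInnerSelf_nonneg_of_pos {S : H →L[𝕜] H}
    (hS : ∀ h : H, h ≠ 0 → 0 < S.reApplyInnerSelf h) (u : H) : 0 ≤ S.reApplyInnerSelf u := by
  rcases eq_or_ne u 0 with rfl | hu
  · simp [reApplyInnerSelf_apply]
  · exact (hS u hu).le

/-- If the form of `G` changes sign between `v` and `w`, on the real line through them it has two
zeros on either side of `v`; the form of `F`, convex along that line, cannot be `≤ 0` at both. -/
lemma exists_reApplyInnerSelf_eq_zero_and_pos (F G : H →L[𝕜] H) {v w : H}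
    (hGv : G.reApplyInnerSelf v < 0) (hGw : 0 < G.reApplyInnerSelf w)
    (hFv : 0 < F.reApplyInnerSelf v) (hFw : 0 ≤ F.reApplyInnerSelf w) :
    ∃ u, G.reApplyInnerSelf u = 0 ∧ 0 < F.reApplyInnerSelf u := by
  obtain ⟨y, x, hy, hx, hGy, hGx⟩ := exists_neg_root_and_pos_root
    (q := re ⟪G v, w⟫_𝕜 + re ⟪G w, v⟫_𝕜) hGw hGv
  by_cases hFx : 0 < F.reApplyInnerSelf (v + (x : 𝕜) • w)
  · refine ⟨_, ?_, hFx⟩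
    rw [reApplyInnerSelf_add_ofReal_smul]
    linear_combination hGx
  · refine ⟨v + (y : 𝕜) • w, ?_, ?_⟩
    · rw [reApplyInnerSelf_add_ofReal_smul]
      linear_combination hGy
    · rw [reApplyInnerSelf_add_ofReal_smul] at hFx ⊢
      have := quadratic_pos_at_neg_of_nonpos_at_pos (q := re ⟪F v, w⟫_𝕜 + re ⟪F w, v⟫_𝕜)
        hFw hFv hy hx (by linarith)
      linarith

/-- At the vertex `c = t / 2a` of `c ↦ a c² - t c + b` its value is `b - t² / 4a ≤ 0`. -/
lemma quadratic_nonpos_of_deriv_eq_zero {A B T : H →L[𝕜] H}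
    (hA : ∀ h : H, h ≠ 0 → 0 < A.reApplyInnerSelf h)
    (hdisc : ∀ u, 4 * A.reApplyInnerSelf u * B.reApplyInnerSelf u ≤ T.reApplyInnerSelf u ^ 2)
    {c : ℝ} {u : H} (hu : 2 * A.reApplyInnerSelf u * c - T.reApplyInnerSelf u = 0) :
    A.reApplyInnerSelf u * c ^ 2 - T.reApplyInnerSelf u * c + B.reApplyInnerSelf u ≤ 0 := by
  rcases eq_or_ne u 0 with rfl | hu₀
  · simp [reApplyInnerSelf_apply]
  have ha := hA u hu₀
  have hT : T.reApplyInnerSelf u = 2 * A.reApplyInnerSelf u * c := by linarith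
  have := hdisc u
  rw [hT] at this ⊢
  nlinarith

lemma lowerRoot_le_upperRoot {A B T : H →L[𝕜] H}
    (hA : ∀ h : H, h ≠ 0 → 0 < A.reApplyInnerSelf h)
    (hdisc : ∀ u, 4 * A.reApplyInnerSelf u * B.reApplyInnerSelf u ≤ T.reApplyInnerSelf u ^ 2)
    {v w : H} (hv : v ≠ 0) (hw : w ≠ 0) :
    lowerRoot (A.reApplyInnerSelf v) (B.reApplyInnerSelf v) (T.reApplyInnerSelf v) ≤
      upperRoot (A.reApplyInnerSelf w) (B.reApplyInnerSelf w) (T.reApplyInnerSelf w) := by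
  by_contra! h
  obtain ⟨c, hwc, hcv⟩ := exists_between h
  obtain ⟨hGv, hFv⟩ := deriv_neg_and_pos_of_lt_lowerRoot (hA v hv) (hdisc v) hcv
  obtain ⟨hGw, hFw⟩ := deriv_pos_and_pos_of_upperRoot_lt (hA w hw) (hdisc w) hwc
  obtain ⟨u, hGu, hFu⟩ := exists_reApplyInnerSelf_eq_zero_and_pos
    (((c ^ 2 : ℝ) : 𝕜) • A - (c : 𝕜) • T + B) (((2 * c : ℝ) : 𝕜) • A - T)
    (v := v) (w := w)
    (by rw [reApplyInnerSelf_smul_sub]; linarith) (by rw [reApplyInnerSelf_smul_sub]; linarith)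
    (by rw [reApplyInnerSelf_sq_smul_sub_smul_add]; linarith)
    (by rw [reApplyInnerSelf_sq_smul_sub_smul_add]; linarith)
  rw [reApplyInnerSelf_smul_sub] at hGu
  rw [reApplyInnerSelf_sq_smul_sub_smul_add] at hFu
  exact hFu.not_ge (quadratic_nonpos_of_deriv_eq_zero hA hdisc hGu)

end Operator

/-- A common scale for finitely many vectors: the largest of their lower roots, which lies below
every upper root by `lowerRoot_le_upperRoot`. -/
lemma exists_pos_mul_add_div_le {𝕜 : Type*} [RCLike 𝕜] {H : Type*} [NormedAddCommGroup H]
    [InnerProductSpace 𝕜 H] {A B T : H →L[𝕜] H}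
    (hA : ∀ h : H, h ≠ 0 → 0 < A.reApplyInnerSelf h)
    (hB : ∀ h : H, h ≠ 0 → 0 < B.reApplyInnerSelf h)
    (hineq : ∀ h : H,
      2 * √(A.reApplyInnerSelf h * B.reApplyInnerSelf h) ≤ T.reApplyInnerSelf h)
    {ι : Type*} [Fintype ι] (e : ι → H) :
    ∃ s > 0, ∀ i, s * A.reApplyInnerSelf (e i) + B.reApplyInnerSelf (e i) / s ≤
      T.reApplyInnerSelf (e i) := by
  classical
  have hdisc u : 4 * A.reApplyInnerSelf u * B.reApplyInnerSelf u ≤ T.reApplyInnerSelf u ^ 2 :=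
    four_mul_le_sq_of_two_sqrt_mul_le (reApplyInnerSelf_nonneg_of_pos hA u)
      (reApplyInnerSelf_nonneg_of_pos hB u) (hineq u)
  set α : H → ℝ := fun u ↦ lowerRoot (A.reApplyInnerSelf u) (B.reApplyInnerSelf u)
    (T.reApplyInnerSelf u)
  rcases (univ.filter fun i ↦ e i ≠ 0).eq_empty_or_nonempty with hzero | hne
  · refine ⟨1, one_pos, fun i ↦ ?_⟩
    have : e i = 0 := by simpa using filter_eq_empty_iff.1 hzero (mem_univ i)
    simp [this, reApplyInnerSelf_apply]
  obtain ⟨i₀, hi₀, hmax⟩ := exists_max_image _ (α ∘ e) hne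
  have hi₀ : e i₀ ≠ 0 := (mem_filter.1 hi₀).2
  have hT₀ : 0 < T.reApplyInnerSelf (e i₀) :=
    (mul_pos two_pos (Real.sqrt_pos.2 (mul_pos (hA _ hi₀) (hB _ hi₀)))).trans_le (hineq _)
  have hα₀ : 0 < α (e i₀) := lowerRoot_pos (hA _ hi₀) (hB _ hi₀) hT₀ (hdisc _)
  refine ⟨α (e i₀), hα₀, fun i ↦ ?_⟩
  rcases eq_or_ne (e i) 0 with hi | hi
  · simp [hi, reApplyInnerSelf_apply]
  exact mul_add_div_le_of_mem_Icc_roots (hA _ hi) (hdisc _) hα₀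
    ⟨hmax i (mem_filter.2 ⟨mem_univ i, hi⟩), lowerRoot_le_upperRoot hA hdisc hi₀ hi⟩

theorem three_forms_sums_general
    {𝕜 : Type*} [RCLike 𝕜] {H : Type*} [NormedAddCommGroup H]
    [InnerProductSpace 𝕜 H]
    (A B T : H →L[𝕜] H)
    (hApos : ∀ h : H, h ≠ 0 → 0 < re (inner 𝕜 (A h) h))
    (hBpos : ∀ h : H, h ≠ 0 → 0 < re (inner 𝕜 (B h) h))
    (hineq : ∀ h : H,
      2 * Real.sqrt (re (inner 𝕜 (A h) h) * re (inner 𝕜 (B h) h))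
        ≤ re (inner 𝕜 (T h) h)) :
    ∀ (n : ℕ) (e : Fin n → H),
      2 * Real.sqrt ((∑ i, re (inner 𝕜 (A (e i)) (e i)))
          * (∑ i, re (inner 𝕜 (B (e i)) (e i))))
        ≤ ∑ i, re (inner 𝕜 (T (e i)) (e i)) := by
  intro n e
  obtain ⟨s, hs, hle⟩ := exists_pos_mul_add_div_le hApos hBpos hineq e
  calc 2 * √((∑ i, A.reApplyInnerSelf (e i)) * ∑ i, B.reApplyInnerSelf (e i))
      ≤ s * ∑ i, A.reApplyInnerSelf (e i) + (∑ i, B.reApplyInnerSelf (e i)) / s :=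
        two_sqrt_mul_le_mul_add_div hs
          (sum_nonneg fun i _ ↦ reApplyInnerSelf_nonneg_of_pos hApos (e i))
          (sum_nonneg fun i _ ↦ reApplyInnerSelf_nonneg_of_pos hBpos (e i))
    _ = ∑ i, (s * A.reApplyInnerSelf (e i) + B.reApplyInnerSelf (e i) / s) := by
        rw [sum_add_distrib, mul_sum, sum_div]
    _ ≤ ∑ i, T.reApplyInnerSelf (e i) := sum_le_sum fun i _ ↦ hle i

/-- Remark (sums version): if `A, B` are bounded self-adjoint positive-definite
operators on a Hilbert space `H` over `ℝ` or `ℂ` and `T` is a bounded self-adjoint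
operator with `Re⟨Th,h⟩ ≥ 2√(Re⟨Ah,h⟩·Re⟨Bh,h⟩)` for all `h`, then for every finite
family `e₁, …, e_n` of vectors in `H` one has
`Σᵢ Re⟨Teᵢ,eᵢ⟩ ≥ 2√((Σᵢ Re⟨Aeᵢ,eᵢ⟩)·(Σᵢ Re⟨Beᵢ,eᵢ⟩))`. -/
theorem three_forms_sums
    {𝕜 : Type*} [RCLike 𝕜] {H : Type*} [NormedAddCommGroup H]
    [InnerProductSpace 𝕜 H] [CompleteSpace H]
    (A B T : H →L[𝕜] H)
    (hA : IsSelfAdjoint A) (hB : IsSelfAdjoint B) (hT : IsSelfAdjoint T)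
    (hApos : ∀ h : H, h ≠ 0 → 0 < re (inner 𝕜 (A h) h))
    (hBpos : ∀ h : H, h ≠ 0 → 0 < re (inner 𝕜 (B h) h))
    (hineq : ∀ h : H,
      2 * Real.sqrt (re (inner 𝕜 (A h) h) * re (inner 𝕜 (B h) h))
        ≤ re (inner 𝕜 (T h) h)) :
    ∀ (n : ℕ) (e : Fin n → H),
      2 * Real.sqrt ((∑ i, re (inner 𝕜 (A (e i)) (e i)))
          * (∑ i, re (inner 𝕜 (B (e i)) (e i))))
        ≤ ∑ i, re (inner 𝕜 (T (e i)) (e i)) :=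
  three_forms_sums_general A B T hApos hBpos hineq
end

section
/- Let V be a real vector space, let σ₀, σ₁, σ₂ be nonnegative quadratic forms on V, and fix s > 0. Then the set { t ∈ (0,∞) : there exists x ∈ V with σ₀[x] − s·σ₁[x] − s⁻¹·σ₂[x] < 0, σ₁[x] > 0, and σ₂[x] = t²·σ₁[x] } is order-connected in ℝ, i.e., whenever it contains two points t₁ < t₂ it contains the whole interval [t₁, t₂]. -/
open QuadraticMap

lemma expand_aux {V : Type*} [AddCommGroup V] [Module ℝ V]
    (Q : QuadraticForm ℝ V) (x₁ x₂ : V) (a b : ℝ) :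
    Q (a • x₁ + b • x₂) = a^2 * Q x₁ + b^2 * Q x₂ + a * b * polar Q x₁ x₂ := by
  have h : polar Q (a • x₁) (b • x₂) = Q (a • x₁ + b • x₂) - Q (a • x₁) - Q (b • x₂) := rfl
  rw [polar_smul_left, polar_smul_right] at h
  rw [QuadraticMap.map_smul, QuadraticMap.map_smul] at h
  simp only [smul_eq_mul] at h
  nlinarith [h]

lemma key_aux {V : Type*} [AddCommGroup V] [Module ℝ V]
    (σ₀ σ₁ σ₂ : QuadraticForm ℝ V)
    (h₀nonneg : ∀ x, 0 ≤ σ₀ x) (h₁nonneg : ∀ x, 0 ≤ σ₁ x) (h₂nonneg : ∀ x, 0 ≤ σ₂ x)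
    (s : ℝ) (hs : 0 < s) (t₁ t₂ t : ℝ) (ht₁ : 0 < t₁) (x₁ x₂ : V)
    (hA : σ₀ x₁ - s * σ₁ x₁ - s⁻¹ * σ₂ x₁ < 0) (h1pos : 0 < σ₁ x₁)
    (h1eq : σ₂ x₁ = t₁ ^ 2 * σ₁ x₁)
    (hB : σ₀ x₂ - s * σ₁ x₂ - s⁻¹ * σ₂ x₂ < 0) (h2pos : 0 < σ₁ x₂)
    (h2eq : σ₂ x₂ = t₂ ^ 2 * σ₁ x₂)
    (hc : polar σ₀ x₁ x₂ - s * polar σ₁ x₁ x₂ - s⁻¹ * polar σ₂ x₁ x₂ ≤ 0)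
    (hle1 : t₁ ≤ t) (hle2 : t ≤ t₂) :
    ∃ x : V, σ₀ x - s * σ₁ x - s⁻¹ * σ₂ x < 0 ∧ 0 < σ₁ x ∧ σ₂ x = t ^ 2 * σ₁ x := by
  set g : ℝ → ℝ := fun l =>
    σ₂ ((1 - l) • x₁ + l • x₂) - t ^ 2 * σ₁ ((1 - l) • x₁ + l • x₂) with hg
  have hgc : ContinuousOn g (Set.Icc (0:ℝ) 1) := by
    have : g = fun l => ((1-l)^2 * σ₂ x₁ + l^2 * σ₂ x₂ + (1-l)*l*polar σ₂ x₁ x₂)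
        - t^2 * ((1-l)^2 * σ₁ x₁ + l^2 * σ₁ x₂ + (1-l)*l*polar σ₁ x₁ x₂) := by
      funext l; simp only [hg, expand_aux]
    rw [this]; fun_prop
  have hg0 : g 0 ≤ 0 := by
    simp only [hg]
    simp only [sub_zero, one_smul, zero_smul, add_zero]
    rw [h1eq]
    have htt : t₁ ^ 2 ≤ t ^ 2 := by nlinarith
    linarith [mul_le_mul_of_nonneg_right htt (h₁nonneg x₁)]
  have hg1 : 0 ≤ g 1 := by
    simp only [hg]
    simp only [sub_self, one_smul, zero_smul, zero_add]
    rw [h2eq]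
    have htt : t ^ 2 ≤ t₂ ^ 2 := by nlinarith
    linarith [mul_le_mul_of_nonneg_right htt (h₁nonneg x₂)]
  obtain ⟨l, hl, hgl⟩ := intermediate_value_Icc (by norm_num : (0:ℝ) ≤ 1) hgc
      (Set.mem_Icc.2 ⟨hg0, hg1⟩)
  set x := (1 - l) • x₁ + l • x₂ with hx
  have hl0 : 0 ≤ l := hl.1
  have hl1 : l ≤ 1 := hl.2
  have e0 := expand_aux σ₀ x₁ x₂ (1 - l) l
  have e1 := expand_aux σ₁ x₁ x₂ (1 - l) l
  have e2 := expand_aux σ₂ x₁ x₂ (1 - l) l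
  have hneg : σ₀ x - s * σ₁ x - s⁻¹ * σ₂ x < 0 := by
    rw [hx, e0, e1, e2]
    have hcross : (1 - l) * l * (polar σ₀ x₁ x₂ - s * polar σ₁ x₁ x₂ - s⁻¹ * polar σ₂ x₁ x₂) ≤ 0 :=
      mul_nonpos_of_nonneg_of_nonpos (mul_nonneg (by linarith) hl0) hc
    rcases eq_or_lt_of_le hl1 with rfl | hlt
    · norm_num; linarith
    · have hP : 0 < (1 - l) ^ 2 := pow_pos (by linarith) 2
      have hPA : (1 - l) ^ 2 * (σ₀ x₁ - s * σ₁ x₁ - s⁻¹ * σ₂ x₁) < 0 :=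
        mul_neg_of_pos_of_neg hP hA
      have hQB : l ^ 2 * (σ₀ x₂ - s * σ₁ x₂ - s⁻¹ * σ₂ x₂) ≤ 0 :=
        mul_nonpos_of_nonneg_of_nonpos (sq_nonneg l) hB.le
      nlinarith [hPA, hQB, hcross]
  refine ⟨x, hneg, ?_, ?_⟩
  · by_contra h
    push_neg at h
    have h1z : σ₁ x = 0 := le_antisymm h (h₁nonneg x)
    have h2z : σ₂ x = 0 := by
      have : g l = 0 := hgl
      simp only [hg, ← hx] at this
      rw [h1z] at this; linarith
    rw [h1z, h2z] at hneg
    have h0 := h₀nonneg x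
    have : s * (0:ℝ) = 0 := mul_zero s
    have : s⁻¹ * (0:ℝ) = 0 := mul_zero s⁻¹
    linarith
  · have : g l = 0 := hgl
    simp only [hg, ← hx] at this
    linarith

/-- Property 3: for nonnegative quadratic forms `σ₀, σ₁, σ₂` on a real vector space and
fixed `s > 0`, the set of `t ∈ (0,∞)` for which some `x` satisfies
`σ₀[x] − s·σ₁[x] − s⁻¹·σ₂[x] < 0`, `σ₁[x] > 0` and `σ₂[x] = t²·σ₁[x]`
is order-connected in `ℝ`. -/
theorem slice_is_interval
    {V : Type*} [AddCommGroup V] [Module ℝ V]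
    (σ₀ σ₁ σ₂ : QuadraticForm ℝ V)
    (h₀nonneg : ∀ x, 0 ≤ σ₀ x) (h₁nonneg : ∀ x, 0 ≤ σ₁ x) (h₂nonneg : ∀ x, 0 ≤ σ₂ x)
    (s : ℝ) (hs : 0 < s) :
    ∀ t₁ t₂ t : ℝ,
      t₁ ∈ {t : ℝ | 0 < t ∧ ∃ x : V,
              σ₀ x - s * σ₁ x - s⁻¹ * σ₂ x < 0 ∧ 0 < σ₁ x ∧ σ₂ x = t ^ 2 * σ₁ x} →
      t₂ ∈ {t : ℝ | 0 < t ∧ ∃ x : V,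
              σ₀ x - s * σ₁ x - s⁻¹ * σ₂ x < 0 ∧ 0 < σ₁ x ∧ σ₂ x = t ^ 2 * σ₁ x} →
      t₁ ≤ t → t ≤ t₂ →
      t ∈ {t : ℝ | 0 < t ∧ ∃ x : V,
              σ₀ x - s * σ₁ x - s⁻¹ * σ₂ x < 0 ∧ 0 < σ₁ x ∧ σ₂ x = t ^ 2 * σ₁ x} := by
  rintro t₁ t₂ t ⟨ht₁, x₁, hA, h1pos, h1eq⟩ ⟨ht₂, x₂, hB, h2pos, h2eq⟩ hle1 hle2
  refine ⟨lt_of_lt_of_le ht₁ hle1, ?_⟩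
  rcases le_or_gt (polar σ₀ x₁ x₂ - s * polar σ₁ x₁ x₂ - s⁻¹ * polar σ₂ x₁ x₂) 0 with hc | hc
  · exact key_aux σ₀ σ₁ σ₂ h₀nonneg h₁nonneg h₂nonneg s hs t₁ t₂ t ht₁ x₁ x₂
      hA h1pos h1eq hB h2pos h2eq hc hle1 hle2
  · have hc' : polar σ₀ x₁ (-x₂) - s * polar σ₁ x₁ (-x₂) - s⁻¹ * polar σ₂ x₁ (-x₂) ≤ 0 := by
      rw [polar_neg_right, polar_neg_right, polar_neg_right]; linarith
    have m0 : σ₀ (-x₂) = σ₀ x₂ := QuadraticMap.map_neg _ _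
    have m1 : σ₁ (-x₂) = σ₁ x₂ := QuadraticMap.map_neg _ _
    have m2 : σ₂ (-x₂) = σ₂ x₂ := QuadraticMap.map_neg _ _
    exact key_aux σ₀ σ₁ σ₂ h₀nonneg h₁nonneg h₂nonneg s hs t₁ t₂ t ht₁ x₁ (-x₂)
      hA h1pos h1eq (by rw [m0, m1, m2]; exact hB) (by rw [m1]; exact h2pos)
      (by rw [m1, m2]; exact h2eq) hc' hle1 hle2
end

section
/- Let V be a real vector space and let σ₀, σ₁, σ₂ be nonnegative nonzero quadratic forms on V. Assume that for every s > 0 the quadratic form σˢ := σ₀ − s·σ₁ − s⁻¹·σ₂ is not nonnegative, i.e., for every s > 0 there exists x ∈ V with σ₀[x] < s·σ₁[x] + s⁻¹·σ₂[x]. Then the set S := { (s,t) ∈ (0,∞)×(0,∞) : there exists x ∈ V with σ₀[x] − s·σ₁[x] − s⁻¹·σ₂[x] < 0, σ₁[x] > 0, and σ₂[x] = t²·σ₁[x] } is a connected subset of ℝ². -/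
/-!
Write `S` as fibred over the `s`-axis. Every fibre is an interval: given witnesses `x`, `y` for
`t₁ ≤ T ≤ t₂`, replace `y` by `-y` if necessary so that `polar σˢ x y ≤ 0`; then `σˢ` stays
negative on the segment from `x` to `y`, and the intermediate value theorem applied to
`σ₂ - T² σ₁` along that segment produces a witness for `T`. Every fibre over `s > 0` is
nonempty: the vector given by the hypothesis is moved slightly towards a vector where `σ₁`
(then `σ₂`) is positive, which works because a null vector of a nonnegative form lies in the
kernel of its polar form. Finally a witness for `(s, t)` also witnesses `(s', t)` for all `s'`
near `s`, and a set with connected projection, connected fibres and this horizontal openness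
is connected.
-/

open Set Filter Topology AffineMap

section FibredSets

variable {α β : Type*} [TopologicalSpace α] [TopologicalSpace β] {S : Set (α × β)}

theorem mem_connectedComponentIn_of_isPreconnected_fiber {a : α} {b b' : β}
    (hfiber : IsPreconnected {b | (a, b) ∈ S}) (hb : (a, b) ∈ S) (hb' : (a, b') ∈ S) :
    (a, b') ∈ connectedComponentIn S (a, b) := by
  refine (isPreconnected_singleton.prod hfiber).subset_connectedComponentIn
    (mk_mem_prod (mem_singleton a) hb) ?_ (mk_mem_prod (mem_singleton a) hb')
  rintro ⟨a', b''⟩ ⟨rfl, h⟩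
  exact h

variable [LocallyConnectedSpace α]

theorem eventually_mem_connectedComponentIn_of_eventually_mem {p : α × β} (hp : p ∈ S)
    (h : ∀ᶠ a in 𝓝 p.1, (a, p.2) ∈ S) :
    ∀ᶠ a in 𝓝 p.1, (a, p.2) ∈ connectedComponentIn S p := by
  filter_upwards [connectedComponentIn_mem_nhds h] with a ha
  refine (isPreconnected_connectedComponentIn.prod isPreconnected_singleton
    ).subset_connectedComponentIn ⟨mem_connectedComponentIn hp, rfl⟩ ?_ ⟨ha, rfl⟩
  rintro ⟨a', b'⟩ ⟨ha', rfl⟩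
  exact connectedComponentIn_subset {a | (a, p.2) ∈ S} p.1 ha'

theorem isPreconnected_of_isPreconnected_fst_image (hfst : IsPreconnected (Prod.fst '' S))
    (hfiber : ∀ a, IsPreconnected {b | (a, b) ∈ S})
    (hopen : ∀ p ∈ S, ∀ᶠ a in 𝓝 p.1, (a, p.2) ∈ S) : IsPreconnected S := by
  rcases S.eq_empty_or_nonempty with rfl | ⟨p₀, hp₀⟩
  · exact isPreconnected_empty
  suffices hSC : S ⊆ connectedComponentIn S p₀ by
    have h := isPreconnected_connectedComponentIn (F := S) (x := p₀)
    rwa [Subset.antisymm (connectedComponentIn_subset S p₀) hSC] at h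
  -- The projections of the component of `p₀` and of the rest of `S` are open; they cannot
  -- meet, since each fibre lies in a single component.
  have hopenC : IsOpen (Prod.fst '' connectedComponentIn S p₀) := by
    refine isOpen_iff_mem_nhds.2 ?_
    rintro _ ⟨p, hpC, rfl⟩
    have hp : p ∈ S := connectedComponentIn_subset _ _ hpC
    filter_upwards [eventually_mem_connectedComponentIn_of_eventually_mem hp (hopen p hp)]
      with a ha
    exact ⟨(a, p.2), connectedComponentIn_eq hpC ▸ ha, rfl⟩
  have hopenD : IsOpen (Prod.fst '' (S \ connectedComponentIn S p₀)) := by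
    refine isOpen_iff_mem_nhds.2 ?_
    rintro _ ⟨p, ⟨hpS, hpC⟩, rfl⟩
    filter_upwards [eventually_mem_connectedComponentIn_of_eventually_mem hpS (hopen p hpS)]
      with a ha
    refine ⟨(a, p.2), ⟨connectedComponentIn_subset _ _ ha, fun haC => hpC ?_⟩, rfl⟩
    rw [connectedComponentIn_eq haC, ← connectedComponentIn_eq ha]
    exact mem_connectedComponentIn hpS
  by_contra hS
  obtain ⟨q, hqS, hqC⟩ := not_subset.1 hS
  have hcover : Prod.fst '' S ⊆
      Prod.fst '' connectedComponentIn S p₀ ∪ Prod.fst '' (S \ connectedComponentIn S p₀) := by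
    rintro _ ⟨p, hp, rfl⟩
    by_cases hpC : p ∈ connectedComponentIn S p₀
    exacts [Or.inl ⟨p, hpC, rfl⟩, Or.inr ⟨p, ⟨hp, hpC⟩, rfl⟩]
  obtain ⟨a, -, ⟨⟨a₁, b₁⟩, hC₁, rfl⟩, ⟨⟨a₂, b₂⟩, ⟨hS₂, hC₂⟩, h⟩⟩ := hfst _ _ hopenC hopenD hcover
    ⟨p₀.1, ⟨p₀, hp₀, rfl⟩, p₀, mem_connectedComponentIn hp₀, rfl⟩
    ⟨q.1, ⟨q, hqS, rfl⟩, q, ⟨hqS, hqC⟩, rfl⟩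
  obtain rfl : a₂ = a₁ := h
  refine hC₂ (connectedComponentIn_eq hC₁ ▸ ?_)
  exact mem_connectedComponentIn_of_isPreconnected_fiber (hfiber a₂)
    (connectedComponentIn_subset S p₀ hC₁) hS₂

end FibredSets

namespace QuadraticMap

theorem apply_lineMap {R M : Type*} [CommRing R] [AddCommGroup M] [Module R M]
    (Q : QuadraticForm R M) (x y : M) (c : R) :
    Q (lineMap x y c) = (1 - c) ^ 2 * Q x + c ^ 2 * Q y + (1 - c) * c * polar Q x y := by
  rw [lineMap_apply_module]
  calc Q ((1 - c) • x + c • y) = Q ((1 - c) • x) + Q (c • y) + polar Q ((1 - c) • x) (c • y) := by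
        rw [polar]; ring
    _ = _ := by
        rw [QuadraticMap.map_smul, QuadraticMap.map_smul, polar_smul_left, polar_smul_right]
        simp only [smul_eq_mul]
        ring

variable {M : Type*} [AddCommGroup M] [Module ℝ M]

theorem continuous_apply_lineMap (Q : QuadraticForm ℝ M) (x y : M) :
    Continuous fun c : ℝ => Q (lineMap x y c) := by
  simp_rw [apply_lineMap]
  fun_prop

theorem tendsto_apply_lineMap_zero (Q : QuadraticForm ℝ M) (x y : M) :
    Tendsto (fun c : ℝ => Q (lineMap x y c)) (𝓝 0) (𝓝 (Q x)) := by
  simpa using (continuous_apply_lineMap Q x y).tendsto 0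

theorem apply_lineMap_neg {Q : QuadraticForm ℝ M} {x y : M} (hx : Q x < 0) (hy : Q y < 0)
    (hxy : polar Q x y ≤ 0) {c : ℝ} (hc : c ∈ Icc (0 : ℝ) 1) : Q (lineMap x y c) < 0 := by
  have hpolar : (1 - c) * c * polar Q x y ≤ 0 :=
    mul_nonpos_of_nonneg_of_nonpos (mul_nonneg (sub_nonneg.2 hc.2) hc.1) hxy
  rw [apply_lineMap]
  rcases le_total c (1 / 2) with h | h
  · nlinarith [mul_neg_of_pos_of_neg (by nlinarith : (0 : ℝ) < (1 - c) ^ 2) hx,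
      mul_nonpos_of_nonneg_of_nonpos (sq_nonneg c) hy.le]
  · nlinarith [mul_neg_of_pos_of_neg (by nlinarith : (0 : ℝ) < c ^ 2) hy,
      mul_nonpos_of_nonneg_of_nonpos (sq_nonneg (1 - c)) hx.le]

theorem polar_eq_zero_of_nonneg {Q : QuadraticForm ℝ M} (hQ : ∀ v, 0 ≤ Q v) {x : M}
    (hx : Q x = 0) (y : M) : polar Q x y = 0 := by
  have hline : ∀ c : ℝ, Q (c • x + y) = Q y + c * polar Q x y := by
    intro c
    have h := polar_smul_left Q c x y
    rw [polar, QuadraticMap.map_smul, hx, smul_zero, smul_eq_mul] at h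
    linarith
  by_contra hp
  have h := hQ (-((Q y + 1) / polar Q x y) • x + y)
  rw [hline, neg_mul, div_mul_cancel₀ _ hp] at h
  linarith

theorem eventually_pos_apply_lineMap {Q : QuadraticForm ℝ M} (hQ : ∀ v, 0 ≤ Q v) (x : M) {y : M}
    (hy : 0 < Q y) : ∀ᶠ c in 𝓝[≠] (0 : ℝ), 0 < Q (lineMap x y c) := by
  rcases (hQ x).eq_or_lt with hx | hx
  · filter_upwards [self_mem_nhdsWithin] with c (hc : c ≠ 0)
    rw [apply_lineMap, ← hx, polar_eq_zero_of_nonneg hQ hx.symm]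
    simpa using mul_pos (pow_pos (abs_pos.2 hc) 2) hy
  · exact nhdsWithin_le_nhds ((tendsto_apply_lineMap_zero Q x y).eventually_const_lt hx)

end QuadraticMap

open QuadraticMap

section SigmaS

variable {V : Type*} [AddCommGroup V] [Module ℝ V] (σ₀ σ₁ σ₂ : QuadraticForm ℝ V)

noncomputable def sigmaS (s : ℝ) : QuadraticForm ℝ V := σ₀ - s • σ₁ - s⁻¹ • σ₂

@[simp]
theorem sigmaS_apply (s : ℝ) (x : V) : sigmaS σ₀ σ₁ σ₂ s x = σ₀ x - s * σ₁ x - s⁻¹ * σ₂ x :=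
  rfl

def negSet : Set (ℝ × ℝ) :=
  {p | 0 < p.1 ∧ 0 < p.2 ∧ ∃ x, sigmaS σ₀ σ₁ σ₂ p.1 x < 0 ∧ 0 < σ₁ x ∧ σ₂ x = p.2 ^ 2 * σ₁ x}

variable {σ₀ σ₁ σ₂}

theorem mem_negSet {s t : ℝ} : (s, t) ∈ negSet σ₀ σ₁ σ₂ ↔
    0 < s ∧ 0 < t ∧ ∃ x, sigmaS σ₀ σ₁ σ₂ s x < 0 ∧ 0 < σ₁ x ∧ σ₂ x = t ^ 2 * σ₁ x :=
  Iff.rfl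

theorem ordConnected_negSet_fiber (h₀ : ∀ x, 0 ≤ σ₀ x) (s : ℝ) :
    OrdConnected {t | (s, t) ∈ negSet σ₀ σ₁ σ₂} := by
  refine ⟨fun t₁ h₁ t₂ h₂ T hT => ?_⟩
  obtain ⟨hs, ht₁, x, hx, hx₁, hx₂⟩ := mem_negSet.1 h₁
  obtain ⟨-, -, y, hy, hy₁, hy₂⟩ := mem_negSet.1 h₂
  obtain ⟨z, hz, hz₁, hz₂, hxz⟩ : ∃ z, sigmaS σ₀ σ₁ σ₂ s z < 0 ∧ 0 < σ₁ z ∧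
      σ₂ z = t₂ ^ 2 * σ₁ z ∧ polar (sigmaS σ₀ σ₁ σ₂ s) x z ≤ 0 := by
    rcases le_total (polar (sigmaS σ₀ σ₁ σ₂ s) x y) 0 with h | h
    · exact ⟨y, hy, hy₁, hy₂, h⟩
    · refine ⟨-y, ?_, ?_, ?_, ?_⟩ <;>
        simp only [QuadraticMap.map_neg, polar_neg_right] <;> linarith
  have hT₀ : 0 < T := ht₁.trans_le hT.1
  obtain ⟨c, hc, hρc⟩ : (0 : ℝ) ∈ (fun c : ℝ => (σ₂ - T ^ 2 • σ₁) (lineMap x z c)) '' Icc 0 1 := by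
    refine intermediate_value_Icc zero_le_one (continuous_apply_lineMap _ x z).continuousOn ⟨?_, ?_⟩
    · simp only [lineMap_apply_zero, sub_apply, smul_apply, hx₂, smul_eq_mul]
      nlinarith [mul_le_mul_of_nonneg_right (pow_le_pow_left₀ ht₁.le hT.1 2) hx₁.le]
    · simp only [lineMap_apply_one, sub_apply, smul_apply, hz₂, smul_eq_mul]
      nlinarith [mul_le_mul_of_nonneg_right (pow_le_pow_left₀ hT₀.le hT.2 2) hz₁.le]
  set w := lineMap x z c
  have hw : sigmaS σ₀ σ₁ σ₂ s w < 0 := apply_lineMap_neg hx hz hxz hc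
  have hw₂ : σ₂ w = T ^ 2 * σ₁ w := by
    simp only [sub_apply, smul_apply, smul_eq_mul] at hρc
    linarith
  have hw₁ : 0 < σ₁ w := by
    refine pos_of_mul_pos_right (a := s + s⁻¹ * T ^ 2) ?_ (by positivity)
    rw [sigmaS_apply, hw₂] at hw
    nlinarith [h₀ w]
  exact ⟨hs, hT₀, w, hw, hw₁, hw₂⟩

theorem eventually_mem_negSet {p : ℝ × ℝ} (hp : p ∈ negSet σ₀ σ₁ σ₂) :
    ∀ᶠ s in 𝓝 p.1, (s, p.2) ∈ negSet σ₀ σ₁ σ₂ := by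
  obtain ⟨hs, ht, x, hx, hx₁, hx₂⟩ := hp
  have hcont : ContinuousAt (fun s => sigmaS σ₀ σ₁ σ₂ s x) p.1 := by
    simp only [sigmaS_apply]
    fun_prop (disch := exact hs.ne')
  filter_upwards [Ioi_mem_nhds hs, hcont.eventually_lt continuousAt_const hx] with s hs hxs
  exact ⟨hs, ht, x, hxs, hx₁, hx₂⟩

theorem exists_mem_negSet (h₁ : ∀ x, 0 ≤ σ₁ x) (h₂ : ∀ x, 0 ≤ σ₂ x) {e₁ e₂ : V}
    (he₁ : 0 < σ₁ e₁) (he₂ : 0 < σ₂ e₂) {s : ℝ} (hs : 0 < s) {x : V}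
    (hx : sigmaS σ₀ σ₁ σ₂ s x < 0) : ∃ t, (s, t) ∈ negSet σ₀ σ₁ σ₂ := by
  obtain ⟨c₁, hc₁, hxc₁⟩ := ((eventually_pos_apply_lineMap h₁ x he₁).and <| nhdsWithin_le_nhds <|
    (tendsto_apply_lineMap_zero _ x e₁).eventually_lt_const hx).exists
  set x₁ := lineMap x e₁ c₁
  obtain ⟨c₂, hc₂, hxc₂, hxc₂'⟩ := ((eventually_pos_apply_lineMap h₂ x₁ he₂).and <|
    nhdsWithin_le_nhds <| ((tendsto_apply_lineMap_zero σ₁ x₁ e₂).eventually_const_lt hc₁).and <|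
    (tendsto_apply_lineMap_zero _ x₁ e₂).eventually_lt_const hxc₁).exists
  refine ⟨√(σ₂ (lineMap x₁ e₂ c₂) / σ₁ (lineMap x₁ e₂ c₂)), hs, by positivity, _, hxc₂', hxc₂, ?_⟩
  rw [Real.sq_sqrt (by positivity), div_mul_cancel₀ _ hxc₂.ne']

theorem fst_image_negSet (h₁ : ∀ x, 0 ≤ σ₁ x) (h₂ : ∀ x, 0 ≤ σ₂ x) (h₁ne : ∃ x, σ₁ x ≠ 0)
    (h₂ne : ∃ x, σ₂ x ≠ 0) (hneg : ∀ s, 0 < s → ∃ x, sigmaS σ₀ σ₁ σ₂ s x < 0) :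
    Prod.fst '' negSet σ₀ σ₁ σ₂ = Ioi 0 := by
  obtain ⟨e₁, he₁⟩ := h₁ne
  obtain ⟨e₂, he₂⟩ := h₂ne
  refine Subset.antisymm (by rintro _ ⟨p, hp, rfl⟩; exact hp.1) fun s (hs : 0 < s) => ?_
  obtain ⟨x, hx⟩ := hneg s hs
  obtain ⟨t, ht⟩ := exists_mem_negSet h₁ h₂ ((h₁ e₁).lt_of_ne' he₁) ((h₂ e₂).lt_of_ne' he₂) hs hx
  exact ⟨(s, t), ht, rfl⟩

end SigmaS

theorem the_set_S_is_connected_general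
    {V : Type*} [AddCommGroup V] [Module ℝ V]
    (σ₀ σ₁ σ₂ : QuadraticForm ℝ V)
    (h₀nonneg : ∀ x, 0 ≤ σ₀ x) (h₁nonneg : ∀ x, 0 ≤ σ₁ x) (h₂nonneg : ∀ x, 0 ≤ σ₂ x)
    (h₁ne : ∃ x, σ₁ x ≠ 0) (h₂ne : ∃ x, σ₂ x ≠ 0)
    (hnotpos : ∀ s : ℝ, 0 < s → ∃ x : V, σ₀ x < s * σ₁ x + s⁻¹ * σ₂ x) :
    IsConnected {p : ℝ × ℝ | 0 < p.1 ∧ 0 < p.2 ∧ ∃ x : V,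
        σ₀ x - p.1 * σ₁ x - p.1⁻¹ * σ₂ x < 0 ∧ 0 < σ₁ x ∧
        σ₂ x = p.2 ^ 2 * σ₁ x} := by
  show IsConnected (negSet σ₀ σ₁ σ₂)
  have hfst : Prod.fst '' negSet σ₀ σ₁ σ₂ = Ioi 0 :=
    fst_image_negSet h₁nonneg h₂nonneg h₁ne h₂ne fun s hs => by
      obtain ⟨x, hx⟩ := hnotpos s hs
      exact ⟨x, by rw [sigmaS_apply]; linarith⟩
  refine ⟨(hfst ▸ nonempty_Ioi : (Prod.fst '' negSet σ₀ σ₁ σ₂).Nonempty).of_image, ?_⟩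
  exact isPreconnected_of_isPreconnected_fst_image (hfst ▸ isPreconnected_Ioi)
    (fun s => (ordConnected_negSet_fiber h₀nonneg s).isPreconnected)
    (fun p hp => eventually_mem_negSet hp)

/-- Property 4: for nonnegative nonzero quadratic forms `σ₀, σ₁, σ₂` on a real vector
space such that `σˢ = σ₀ − s·σ₁ − s⁻¹·σ₂` fails to be nonnegative for every `s > 0`,
the set `S = {(s,t) ∈ (0,∞)² : ∃ x, σˢ[x] < 0, σ₁[x] > 0, σ₂[x] = t²·σ₁[x]}` is a
connected subset of `ℝ²`. -/
theorem the_set_S_is_connected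
    {V : Type*} [AddCommGroup V] [Module ℝ V]
    (σ₀ σ₁ σ₂ : QuadraticForm ℝ V)
    (h₀nonneg : ∀ x, 0 ≤ σ₀ x) (h₁nonneg : ∀ x, 0 ≤ σ₁ x) (h₂nonneg : ∀ x, 0 ≤ σ₂ x)
    (h₀ne : ∃ x, σ₀ x ≠ 0) (h₁ne : ∃ x, σ₁ x ≠ 0) (h₂ne : ∃ x, σ₂ x ≠ 0)
    (hnotpos : ∀ s : ℝ, 0 < s → ∃ x : V, σ₀ x < s * σ₁ x + s⁻¹ * σ₂ x) :
    IsConnected {p : ℝ × ℝ | 0 < p.1 ∧ 0 < p.2 ∧ ∃ x : V,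
        σ₀ x - p.1 * σ₁ x - p.1⁻¹ * σ₂ x < 0 ∧ 0 < σ₁ x ∧
        σ₂ x = p.2 ^ 2 * σ₁ x} :=
  the_set_S_is_connected_general σ₀ σ₁ σ₂ h₀nonneg h₁nonneg h₂nonneg h₁ne h₂ne hnotpos
end
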